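/- arXiv:2603.23970 — 3 statements merged into one kernel-verified Lean document; each statement's English description precedes it below -/
import Mathlib

section
/- Let k ≥ 3 be an odd integer, let A = {a_1, …, a_n} be a finite multiset of integers, and let M' = k·(max_i |a_i|) + 1. Define the multiset B = {a_1 + M', …, a_n + M'} ∪ {(k−1)·M'}. Then there exist k−1 elements of A (with multiplicity) summing to 0 if and only if there exists a sub-multiset T of B with |T| = k that can be partitioned into two sub-multisets T₁ and T₂ of equal sum. -/
private lemma exists_le_of_le_map {f : ℤ → ℤ} (hf : Function.Injective f) :
    ∀ {t s : Multiset ℤ}, t ≤ s.map f → ∃ u, u ≤ s ∧ u.map f = t := by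
  intro t
  induction t using Multiset.induction with
  | empty => intro s _; exact ⟨0, by simp⟩
  | cons a t ih =>
    intro s h
    have ha : a ∈ s.map f := Multiset.mem_of_le h (Multiset.mem_cons_self a t)
    obtain ⟨b, hb, rfl⟩ := Multiset.mem_map.mp ha
    have h' : t ≤ (s.erase b).map f := by
      rw [Multiset.map_erase f hf b s]
      have := Multiset.erase_le_erase (f b) h
      simpa using this
    obtain ⟨u, hu, hmap⟩ := ih h'
    refine ⟨b ::ₘ u, ?_, by simp [hmap]⟩
    calc b ::ₘ u ≤ b ::ₘ s.erase b := Multiset.cons_le_cons b hu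
    _ = s := Multiset.cons_erase hb

private lemma map_add_sum (S : Multiset ℤ) (M' : ℤ) :
    (S.map (· + M')).sum = S.sum + (Multiset.card S : ℤ) * M' := by
  induction S using Multiset.induction with
  | empty => simp
  | cons a S ih => simp [ih]; ring

private lemma sum_abs_le (A S : Multiset ℤ) (hS : S ≤ A) :
    |S.sum| ≤ (Multiset.card S : ℤ) * ((A.map Int.natAbs).sup : ℤ) := by
  calc |S.sum| ≤ (S.map abs).sum := Multiset.abs_sum_le_sum_abs
  _ ≤ (Multiset.card (S.map abs)) • ((A.map Int.natAbs).sup : ℤ) := by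
      apply Multiset.sum_le_card_nsmul
      intro x hx
      obtain ⟨a, ha, rfl⟩ := Multiset.mem_map.mp hx
      have haA : a ∈ A := Multiset.mem_of_le hS ha
      have : a.natAbs ≤ (A.map Int.natAbs).sup :=
        Multiset.le_sup (Multiset.mem_map.mpr ⟨a, haA, rfl⟩)
      rw [Int.abs_eq_natAbs]
      exact_mod_cast this
  _ = (Multiset.card S : ℤ) * ((A.map Int.natAbs).sup : ℤ) := by
      simp [nsmul_eq_mul]

private lemma core (k : ℕ) (hk : 3 ≤ k) (A : Multiset ℤ) (M' : ℤ)
    (hM' : M' = (k : ℤ) * ((A.map Int.natAbs).sup : ℤ) + 1)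
    (T₁ T₂ : Multiset ℤ) (hb : (k - 1 : ℤ) * M' ∈ T₁)
    (hle : T₁.erase ((k - 1 : ℤ) * M') + T₂ ≤ A.map (· + M'))
    (hcard : Multiset.card T₁ + Multiset.card T₂ = k) (hsum : T₁.sum = T₂.sum) :
    ∃ S : Multiset ℤ, S ≤ A ∧ Multiset.card S = k - 1 ∧ S.sum = 0 := by
  set m : ℤ := ((A.map Int.natAbs).sup : ℤ) with hm
  have hm0 : 0 ≤ m := by positivity
  have hinj : Function.Injective (· + M') := fun x y h => by simpa using h
  obtain ⟨S₁, hS₁A, hS₁⟩ := exists_le_of_le_map hinj (le_trans (Multiset.le_add_right _ _) hle)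
  obtain ⟨S₂, hS₂A, hS₂⟩ := exists_le_of_le_map hinj (le_trans (Multiset.le_add_left _ _) hle)
  have hb1 : |S₁.sum| ≤ (Multiset.card S₁ : ℤ) * m := sum_abs_le A S₁ hS₁A
  have hb2 : |S₂.sum| ≤ (Multiset.card S₂ : ℤ) * m := sum_abs_le A S₂ hS₂A
  have hT₁pos : 1 ≤ Multiset.card T₁ := Multiset.card_pos_iff_exists_mem.mpr ⟨_, hb⟩
  have hcS₁ : Multiset.card S₁ = Multiset.card T₁ - 1 := by
    have := congrArg Multiset.card hS₁
    simpa [Multiset.card_erase_of_mem hb] using this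
  have hcS₂ : Multiset.card S₂ = Multiset.card T₂ := by
    have := congrArg Multiset.card hS₂; simpa using this
  have hT₁s : T₁.sum = (k - 1 : ℤ) * M' + S₁.sum + (Multiset.card S₁ : ℤ) * M' := by
    have h1 : ((k - 1 : ℤ) * M') ::ₘ T₁.erase ((k - 1 : ℤ) * M') = T₁ := Multiset.cons_erase hb
    have h2 : (T₁.erase ((k - 1 : ℤ) * M')).sum = S₁.sum + (Multiset.card S₁ : ℤ) * M' := by
      rw [← hS₁, map_add_sum]
    calc T₁.sum = (((k - 1 : ℤ) * M') ::ₘ T₁.erase ((k - 1 : ℤ) * M')).sum := by rw [h1]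
    _ = (k - 1 : ℤ) * M' + (T₁.erase ((k - 1 : ℤ) * M')).sum := Multiset.sum_cons _ _
    _ = _ := by rw [h2]; ring
  have hT₂s : T₂.sum = S₂.sum + (Multiset.card S₂ : ℤ) * M' := by
    rw [← hS₂, map_add_sum]
  have hc : (Multiset.card S₁ : ℤ) + (Multiset.card S₂ : ℤ) = (k : ℤ) - 1 := by omega
  have key : ((k : ℤ) - 1 + (Multiset.card S₁ : ℤ) - (Multiset.card S₂ : ℤ)) * M'
      = S₂.sum - S₁.sum := by
    rw [hT₁s, hT₂s] at hsum; linarith [hsum]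
  have hM'pos : 1 ≤ M' := by rw [hM']; nlinarith
  have habs : |S₂.sum - S₁.sum| < M' := by
    have h3 : |S₂.sum - S₁.sum| ≤ |S₂.sum| + |S₁.sum| := abs_sub _ _
    have h4 : |S₂.sum| + |S₁.sum| ≤ ((Multiset.card S₁ : ℤ) + (Multiset.card S₂ : ℤ)) * m := by
      nlinarith
    rw [hc] at h4; rw [hM']; nlinarith
  have hn : (k : ℤ) - 1 + (Multiset.card S₁ : ℤ) - (Multiset.card S₂ : ℤ) = 0 := by
    by_contra hne
    have h1 : 1 ≤ |(k : ℤ) - 1 + (Multiset.card S₁ : ℤ) - (Multiset.card S₂ : ℤ)| :=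
      Int.one_le_abs (by omega)
    have h2 := abs_mul ((k : ℤ) - 1 + (Multiset.card S₁ : ℤ) - (Multiset.card S₂ : ℤ)) M'
    rw [key, abs_of_pos (by omega : (0:ℤ) < M')] at h2
    nlinarith
  have hc₁0 : Multiset.card S₁ = 0 ∧ Multiset.card S₂ = k - 1 := by omega
  have hS₁0 : S₁ = 0 := Multiset.card_eq_zero.mp hc₁0.1
  have hsum2 : S₂.sum = 0 := by
    rw [hn] at key; rw [hS₁0] at key; simpa using key.symm
  exact ⟨S₂, hS₂A, hc₁0.2, hsum2⟩

private lemma core2 (k : ℕ) (hk : 3 ≤ k) (hodd : Odd k) (A : Multiset ℤ) (M' : ℤ)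
    (hM' : M' = (k : ℤ) * ((A.map Int.natAbs).sup : ℤ) + 1)
    (T₁ T₂ : Multiset ℤ) (hle : T₁ + T₂ ≤ A.map (· + M'))
    (hcard : Multiset.card T₁ + Multiset.card T₂ = k) (hsum : T₁.sum = T₂.sum) :
    False := by
  set m : ℤ := ((A.map Int.natAbs).sup : ℤ) with hm
  have hm0 : 0 ≤ m := by positivity
  have hinj : Function.Injective (· + M') := fun x y h => by simpa using h
  obtain ⟨S₁, hS₁A, hS₁⟩ := exists_le_of_le_map hinj (le_trans (Multiset.le_add_right _ _) hle)
  obtain ⟨S₂, hS₂A, hS₂⟩ := exists_le_of_le_map hinj (le_trans (Multiset.le_add_left _ _) hle)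
  have hb1 : |S₁.sum| ≤ (Multiset.card S₁ : ℤ) * m := sum_abs_le A S₁ hS₁A
  have hb2 : |S₂.sum| ≤ (Multiset.card S₂ : ℤ) * m := sum_abs_le A S₂ hS₂A
  have hcS₁ : Multiset.card S₁ = Multiset.card T₁ := by
    have := congrArg Multiset.card hS₁; simpa using this
  have hcS₂ : Multiset.card S₂ = Multiset.card T₂ := by
    have := congrArg Multiset.card hS₂; simpa using this
  have hT₁s : T₁.sum = S₁.sum + (Multiset.card S₁ : ℤ) * M' := by rw [← hS₁, map_add_sum]
  have hT₂s : T₂.sum = S₂.sum + (Multiset.card S₂ : ℤ) * M' := by rw [← hS₂, map_add_sum]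
  have hc : (Multiset.card S₁ : ℤ) + (Multiset.card S₂ : ℤ) = (k : ℤ) := by omega
  have key : ((Multiset.card S₁ : ℤ) - (Multiset.card S₂ : ℤ)) * M' = S₂.sum - S₁.sum := by
    rw [hT₁s, hT₂s] at hsum; linarith [hsum]
  have hM'pos : 1 ≤ M' := by rw [hM']; nlinarith
  have habs : |S₂.sum - S₁.sum| < M' := by
    have h3 : |S₂.sum - S₁.sum| ≤ |S₂.sum| + |S₁.sum| := abs_sub _ _
    have h4 : |S₂.sum| + |S₁.sum| ≤ ((Multiset.card S₁ : ℤ) + (Multiset.card S₂ : ℤ)) * m := by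
      nlinarith
    rw [hc] at h4; rw [hM']; nlinarith
  have hn : (Multiset.card S₁ : ℤ) - (Multiset.card S₂ : ℤ) = 0 := by
    by_contra hne
    have h1 : 1 ≤ |(Multiset.card S₁ : ℤ) - (Multiset.card S₂ : ℤ)| := Int.one_le_abs (by omega)
    have h2 := abs_mul ((Multiset.card S₁ : ℤ) - (Multiset.card S₂ : ℤ)) M'
    rw [key, abs_of_pos (by omega : (0:ℤ) < M')] at h2
    nlinarith
  obtain ⟨j, hj⟩ := hodd
  omega

/-- Reduction from `(k-1)`-Sum to `k`-PartSum: for odd `k ≥ 3`, a multiset `A` of integers,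
and `M' = k · (max |a|) + 1`, letting `B = {a + M' : a ∈ A} ∪ {(k-1)·M'}`, there are
`k-1` elements of `A` (with multiplicity) summing to `0` iff there is a sub-multiset `T ≤ B`
of size `k` that splits into two parts `T₁, T₂` of equal sum. -/
theorem kSum_iff_kPartSum (k : ℕ) (hk : 3 ≤ k) (hodd : Odd k) (A : Multiset ℤ)
    (M' : ℤ) (hM' : M' = (k : ℤ) * ((A.map Int.natAbs).sup : ℤ) + 1)
    (B : Multiset ℤ) (hB : B = A.map (· + M') + {(k - 1 : ℤ) * M'}) :
    (∃ S : Multiset ℤ, S ≤ A ∧ Multiset.card S = k - 1 ∧ S.sum = 0) ↔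
      (∃ T₁ T₂ : Multiset ℤ, T₁ + T₂ ≤ B ∧ Multiset.card (T₁ + T₂) = k ∧
        T₁.sum = T₂.sum) := by
  constructor
  · rintro ⟨S, hSA, hScard, hSsum⟩
    refine ⟨S.map (· + M'), {(k - 1 : ℤ) * M'}, ?_, ?_, ?_⟩
    · rw [hB]; exact add_le_add (Multiset.map_le_map hSA) le_rfl
    · simp [hScard]; omega
    · rw [map_add_sum, hSsum, hScard]
      have : ((k - 1 : ℕ) : ℤ) = (k : ℤ) - 1 := by push_cast [Nat.cast_sub (by omega : 1 ≤ k)]; ring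
      simp [this]
  · rintro ⟨T₁, T₂, hle, hcard, hsum⟩
    rw [hB] at hle
    simp only [Multiset.card_add] at hcard
    by_cases hbT : (k - 1 : ℤ) * M' ∈ T₁ + T₂
    · have herase : (T₁ + T₂).erase ((k - 1 : ℤ) * M') ≤ A.map (· + M') := by
        have h := Multiset.erase_le_erase ((k - 1 : ℤ) * M') hle
        rwa [add_comm (A.map _) _, Multiset.singleton_add, Multiset.erase_cons_head] at h
      rcases Multiset.mem_add.mp hbT with h1 | h2
      · rw [Multiset.erase_add_left_pos _ h1] at herase
        exact core k hk A M' hM' T₁ T₂ h1 herase hcard hsum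
      · rw [Multiset.erase_add_right_pos _ h2] at herase
        rw [add_comm] at herase
        exact core k hk A M' hM' T₂ T₁ h2 herase (by omega) hsum.symm
    · exfalso
      apply core2 k hk hodd A M' hM' T₁ T₂ ?_ hcard hsum
      rw [Multiset.le_iff_count]
      intro a
      have h := Multiset.le_iff_count.mp hle a
      by_cases hab : a = (k - 1 : ℤ) * M'
      · rw [hab, Multiset.count_eq_zero.mpr hbT]
        exact Nat.zero_le _
      · simpa [Multiset.count_singleton, hab] using h
end

section
/- Let h > 0, let δ > 0 with 1/δ a positive integer, and let x_1, …, x_n be positive reals that are the lengths of pairwise disjoint subintervals of [0, h] (i.e., the items are stacked inside a container of height h). Then there exists a subset S ⊆ {1,…,n} with |S| ≥ n − δ·n − 1 such that Σ_{i∈S} x_i ≤ (1 − δ)·h. (Remove all items intersecting one of the 1/δ equal horizontal strips of height δh: the total number of (item, strip) incidences is at most n + 1/δ − 1, so the least-loaded strip meets at most δn + 1 items, and after removing them the remaining intervals avoid an open strip of length δh.) -/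
open Finset in
/-- Shrinking a container: if `n` items of heights `x_i` are stacked (as pairwise disjoint
half-open intervals) inside a container of height `h`, and `1/δ` is a positive integer, then
one can keep at least `n − δn − 1` items whose total height is at most `(1 − δ)h`. -/
theorem shrink_container (h : ℝ) (hh : 0 < h) (δ : ℝ) (q : ℕ) (hq : 1 ≤ q)
    (hδ : δ = 1 / (q : ℝ)) (n : ℕ) (s x : Fin n → ℝ)
    (hx : ∀ i, 0 < x i) (hs0 : ∀ i, 0 ≤ s i) (hsh : ∀ i, s i + x i ≤ h)
    (hdisj : ∀ i j, i ≠ j →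
      Disjoint (Set.Ico (s i) (s i + x i)) (Set.Ico (s j) (s j + x j))) :
    ∃ S : Finset (Fin n), (S.card : ℝ) ≥ (n : ℝ) - δ * n - 1 ∧
      ∑ i ∈ S, x i ≤ (1 - δ) * h := by
  classical
  have hq0 : (0:ℝ) < (q:ℝ) := Nat.cast_pos.mpr hq
  set d : ℝ := δ * h with hd_def
  have hδ0 : 0 < δ := by rw [hδ]; positivity
  have hd : 0 < d := mul_pos hδ0 hh
  have hqd : (q:ℝ) * d = h := by
    rw [hd_def, hδ]; field_simp
  -- the "meets strip k" predicate
  set P : ℕ → Fin n → Prop :=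
    fun k i => (k:ℝ) * d < s i + x i ∧ s i < ((k:ℝ) + 1) * d with hP
  -- per-item strip set is a Nat interval
  have hbq : ∀ i, ⌈(s i + x i) / d⌉₊ ≤ q := by
    intro i
    rw [Nat.ceil_le, div_le_iff₀ hd, hqd]
    exact hsh i
  have ha0 : ∀ i, 0 ≤ s i / d := fun i => div_nonneg (hs0 i) hd.le
  have key1 : ∀ i, (Finset.range q).filter (fun k => P k i)
      = Finset.Ico ⌊s i / d⌋₊ ⌈(s i + x i) / d⌉₊ := by
    intro i
    ext k
    simp only [Finset.mem_filter, Finset.mem_range, Finset.mem_Ico, hP]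
    constructor
    · rintro ⟨hk, h1, h2⟩
      refine ⟨?_, Nat.lt_ceil.mpr ((lt_div_iff₀ hd).mpr h1)⟩
      have : s i / d < (k:ℝ) + 1 := (div_lt_iff₀ hd).mpr h2
      have := (Nat.floor_lt (ha0 i)).mpr (by exact_mod_cast this : s i / d < ((k+1 : ℕ):ℝ))
      omega
    · rintro ⟨h1, h2⟩
      have hkq : k < q := lt_of_lt_of_le h2 (hbq i)
      refine ⟨hkq, (lt_div_iff₀ hd).mp (Nat.lt_ceil.mp h2), ?_⟩
      have : s i / d < ((k+1 : ℕ):ℝ) := (Nat.floor_lt (ha0 i)).mp (by omega)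
      rw [div_lt_iff₀ hd] at this
      exact_mod_cast this
  -- interior boundary points strictly inside item i
  have key2 : ∀ i, (Finset.Ioo 0 q).filter
      (fun k : ℕ => s i < (k:ℝ) * d ∧ (k:ℝ) * d < s i + x i)
      = Finset.Ico (⌊s i / d⌋₊ + 1) ⌈(s i + x i) / d⌉₊ := by
    intro i
    ext k
    simp only [Finset.mem_filter, Finset.mem_Ioo, Finset.mem_Ico]
    constructor
    · rintro ⟨⟨-, -⟩, h1, h2⟩
      refine ⟨?_, Nat.lt_ceil.mpr ((lt_div_iff₀ hd).mpr h2)⟩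
      have : s i / d < (k:ℝ) := (div_lt_iff₀ hd).mpr h1
      have := (Nat.floor_lt (ha0 i)).mpr this
      omega
    · rintro ⟨h1, h2⟩
      have hkq : k < q := lt_of_lt_of_le h2 (hbq i)
      have hk0 : 0 < k := by
        have := Nat.zero_le ⌊s i / d⌋₊; omega
      refine ⟨⟨hk0, hkq⟩, ?_, (lt_div_iff₀ hd).mp (Nat.lt_ceil.mp h2)⟩
      have : s i / d < (k:ℝ) := (Nat.floor_lt (ha0 i)).mp (by omega)
      exact (div_lt_iff₀ hd).mp this
  -- each interior boundary meets at most one item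
  have hbd1 : ∀ k : ℕ, ((Finset.univ : Finset (Fin n)).filter
      (fun i => s i < (k:ℝ) * d ∧ (k:ℝ) * d < s i + x i)).card ≤ 1 := by
    intro k
    refine Finset.card_le_one.mpr ?_
    intro i hi j hj
    simp only [Finset.mem_filter] at hi hj
    by_contra hij
    exact Set.disjoint_left.mp (hdisj i j hij)
      ⟨hi.2.1.le, hi.2.2⟩ ⟨hj.2.1.le, hj.2.2⟩
  -- double counting: total incidences
  have hswap1 : ∑ k ∈ Finset.range q,
      ((Finset.univ : Finset (Fin n)).filter (fun i => P k i)).card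
      = ∑ i : Fin n, ((Finset.range q).filter (fun k => P k i)).card := by
    simp only [Finset.card_filter]
    exact Finset.sum_comm
  have hswap2 : ∑ i : Fin n, ((Finset.Ioo 0 q).filter
      (fun k : ℕ => s i < (k:ℝ) * d ∧ (k:ℝ) * d < s i + x i)).card
      = ∑ k ∈ Finset.Ioo 0 q, ((Finset.univ : Finset (Fin n)).filter
      (fun i => s i < (k:ℝ) * d ∧ (k:ℝ) * d < s i + x i)).card := by
    simp only [Finset.card_filter]
    exact Finset.sum_comm
  have htot : ∑ k ∈ Finset.range q,
      ((Finset.univ : Finset (Fin n)).filter (fun i => P k i)).card ≤ n + (q - 1) := by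
    rw [hswap1]
    have hle : ∀ i : Fin n, ((Finset.range q).filter (fun k => P k i)).card
        ≤ 1 + ((Finset.Ioo 0 q).filter
          (fun k : ℕ => s i < (k:ℝ) * d ∧ (k:ℝ) * d < s i + x i)).card := by
      intro i
      rw [key1 i, key2 i, Nat.card_Ico, Nat.card_Ico]
      omega
    calc ∑ i : Fin n, ((Finset.range q).filter (fun k => P k i)).card
        ≤ ∑ i : Fin n, (1 + ((Finset.Ioo 0 q).filter
          (fun k : ℕ => s i < (k:ℝ) * d ∧ (k:ℝ) * d < s i + x i)).card) :=
          Finset.sum_le_sum fun i _ => hle i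
      _ = n + ∑ i : Fin n, ((Finset.Ioo 0 q).filter
          (fun k : ℕ => s i < (k:ℝ) * d ∧ (k:ℝ) * d < s i + x i)).card := by
          rw [Finset.sum_add_distrib]; simp
      _ ≤ n + (q - 1) := by
          rw [hswap2]
          have : ∑ k ∈ Finset.Ioo 0 q, ((Finset.univ : Finset (Fin n)).filter
              (fun i => s i < (k:ℝ) * d ∧ (k:ℝ) * d < s i + x i)).card
              ≤ ∑ k ∈ Finset.Ioo 0 q, 1 :=
            Finset.sum_le_sum fun k _ => hbd1 k
          simp only [Finset.sum_const, smul_eq_mul, mul_one, Nat.card_Ioo] at this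
          omega
  -- pick a least-loaded strip
  obtain ⟨k₀, hk₀mem, hk₀min⟩ := Finset.exists_min_image (Finset.range q)
    (fun k => ((Finset.univ : Finset (Fin n)).filter (fun i => P k i)).card)
    ⟨0, Finset.mem_range.mpr hq⟩
  set c₀ : ℕ := ((Finset.univ : Finset (Fin n)).filter (fun i => P k₀ i)).card with hc₀
  have hmin : q * c₀ ≤ n + (q - 1) := by
    calc q * c₀ = ∑ _k ∈ Finset.range q, c₀ := by
          simp [Finset.sum_const, Finset.card_range, mul_comm]
      _ ≤ ∑ k ∈ Finset.range q,
          ((Finset.univ : Finset (Fin n)).filter (fun i => P k i)).card :=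
          Finset.sum_le_sum fun k hk => hk₀min k hk
      _ ≤ n + (q - 1) := htot
  have hmin' : q * c₀ + 1 ≤ n + q := by omega
  -- the kept set
  refine ⟨(Finset.univ : Finset (Fin n)).filter (fun i => ¬ P k₀ i), ?_, ?_⟩
  · -- cardinality bound
    have hcard : ((Finset.univ : Finset (Fin n)).filter (fun i => ¬ P k₀ i)).card
        = n - c₀ := by
      have := Finset.card_filter_add_card_filter_not
        (s := (Finset.univ : Finset (Fin n))) (p := fun i => P k₀ i)
      simp only [Finset.card_univ, Fintype.card_fin] at this
      omega
    have hc₀n : c₀ ≤ n := by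
      calc c₀ ≤ (Finset.univ : Finset (Fin n)).card := Finset.card_filter_le _ _
        _ = n := by simp
    have hcast : ((Finset.univ : Finset (Fin n)).filter (fun i => ¬ P k₀ i)).card
        = (n:ℝ) - (c₀:ℝ) := by
      rw [hcard]; push_cast [Nat.cast_sub hc₀n]; ring
    rw [ge_iff_le, hcast]
    have hc₀le : (c₀:ℝ) ≤ δ * n + 1 := by
      have h1 : (q:ℝ) * c₀ + 1 ≤ (n:ℝ) + q := by exact_mod_cast hmin'
      rw [hδ]
      have key : ((c₀:ℝ) - 1) * q ≤ (n:ℝ) := by nlinarith [h1]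
      have h2 : (c₀:ℝ) - 1 ≤ (n:ℝ)/q := (le_div_iff₀ hq0).mpr key
      have h3 : (n:ℝ)/q = 1/(q:ℝ)*n := by ring
      linarith
    linarith
  · -- sum bound via Lebesgue measure
    have hk₀q : k₀ < q := Finset.mem_range.mp hk₀mem
    have hk₁ : ((k₀:ℝ) + 1) * d ≤ h := by
      rw [← hqd]
      have : (k₀:ℝ) + 1 ≤ (q:ℝ) := by exact_mod_cast hk₀q
      nlinarith
    have hk₀0 : 0 ≤ (k₀:ℝ) * d := by positivity
    set S := (Finset.univ : Finset (Fin n)).filter (fun i => ¬ P k₀ i) with hS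
    have hsub : (⋃ i ∈ S, Set.Ico (s i) (s i + x i))
        ⊆ Set.Icc 0 ((k₀:ℝ) * d) ∪ Set.Icc (((k₀:ℝ) + 1) * d) h := by
      intro y hy
      simp only [Set.mem_iUnion] at hy
      obtain ⟨i, hi, hyi⟩ := hy
      simp only [hS, Finset.mem_filter, hP, not_and_or, not_lt] at hi
      rcases hi.2 with h1 | h2
      · left
        exact ⟨(hs0 i).trans hyi.1, le_trans hyi.2.le h1⟩
      · right
        exact ⟨h2.trans hyi.1, hyi.2.le.trans (hsh i)⟩
    have hvol : ∑ i ∈ S, ENNReal.ofReal (x i)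
        = MeasureTheory.volume (⋃ i ∈ S, Set.Ico (s i) (s i + x i)) := by
      rw [MeasureTheory.measure_biUnion_finset ?_ (fun i _ => measurableSet_Ico)]
      · refine Finset.sum_congr rfl fun i _ => ?_
        rw [Real.volume_Ico]
        congr 1
        ring
      · intro i hi j hj hij
        exact hdisj i j hij
    have hvol2 : MeasureTheory.volume (⋃ i ∈ S, Set.Ico (s i) (s i + x i))
        ≤ ENNReal.ofReal ((1 - δ) * h) := by
      calc MeasureTheory.volume (⋃ i ∈ S, Set.Ico (s i) (s i + x i))
          ≤ MeasureTheory.volume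
            (Set.Icc 0 ((k₀:ℝ) * d) ∪ Set.Icc (((k₀:ℝ) + 1) * d) h) :=
            MeasureTheory.measure_mono hsub
        _ ≤ MeasureTheory.volume (Set.Icc 0 ((k₀:ℝ) * d))
            + MeasureTheory.volume (Set.Icc (((k₀:ℝ) + 1) * d) h) :=
            MeasureTheory.measure_union_le _ _
        _ = ENNReal.ofReal ((k₀:ℝ) * d - 0) + ENNReal.ofReal (h - ((k₀:ℝ) + 1) * d) := by
            rw [Real.volume_Icc, Real.volume_Icc]
        _ = ENNReal.ofReal ((k₀:ℝ) * d - 0 + (h - ((k₀:ℝ) + 1) * d)) := by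
            rw [ENNReal.ofReal_add (by linarith) (by linarith)]
        _ = ENNReal.ofReal ((1 - δ) * h) := by
            congr 1
            rw [hd_def]; ring
    have hfinal : ENNReal.ofReal (∑ i ∈ S, x i) ≤ ENNReal.ofReal ((1 - δ) * h) := by
      rw [ENNReal.ofReal_sum_of_nonneg fun i _ => (hx i).le]
      rw [hvol] ; exact hvol2
    have hδh : 0 ≤ (1 - δ) * h := by
      have : δ ≤ 1 := by
        rw [hδ]
        rw [div_le_one hq0]
        exact_mod_cast hq
      nlinarith
    exact (ENNReal.ofReal_le_ofReal_iff hδh).mp hfinal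
end

section
/- Let N > 0, ε ∈ (0,1), and suppose a set of items is packed into the square [0,N]² such that one side of each horizontal item has length at most ε·N and the other side at most (1/2 + 2ε)·N, i.e., every item is 'skewed'. Choose a strip S of thickness ε·N uniformly at random, which with probability 1/2 is a horizontal strip [0,N]×[aN,(a+ε)N] with a uniform in [0, 1−ε], and with probability 1/2 a vertical strip [aN,(a+ε)N]×[0,N] with a uniform in [0, 1−ε]. Then each fixed skewed item of width at most (1/2+2ε)N and height at most εN survives (is disjoint from S) with probability at least 3/4 − 5ε/(1−ε). -/
open MeasureTheory

lemma strip_vol_aux (ε N c l : ℝ) (hε0 : 0 < ε) (hε1 : ε < 1) (hN : 0 < N) (hl : 0 < l) :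
    (1 - ε) - (l / N + ε) ≤
      (volume {a : ℝ | a ∈ Set.Icc 0 (1 - ε) ∧ ((a + ε) * N ≤ c ∨ c + l ≤ a * N)}).toReal := by
  set S : Set ℝ := {a : ℝ | a ∈ Set.Icc 0 (1 - ε) ∧ ((a + ε) * N ≤ c ∨ c + l ≤ a * N)} with hS
  have hsub : S ⊆ Set.Icc 0 (1 - ε) := fun a ha => ha.1
  have hfin : volume S ≠ ⊤ :=
    ne_top_of_le_ne_top (by simp [Real.volume_Icc]) (measure_mono hsub)
  have hcover : Set.Icc (0:ℝ) (1 - ε) ⊆ S ∪ Set.Ioo (c / N - ε) ((c + l) / N) := by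
    intro a ha
    by_cases hp : (a + ε) * N ≤ c ∨ c + l ≤ a * N
    · exact Or.inl ⟨ha, hp⟩
    · push_neg at hp
      obtain ⟨h1, h2⟩ := hp
      refine Or.inr ⟨?_, ?_⟩
      · have : c / N < a + ε := (div_lt_iff₀ hN).mpr h1
        linarith
      · exact (lt_div_iff₀ hN).mpr h2
  have hle := (measure_mono hcover).trans (measure_union_le (μ := volume) S (Set.Ioo (c / N - ε) ((c + l) / N)))
  rw [Real.volume_Icc, Real.volume_Ioo] at hle
  have hlen : (c + l) / N - (c / N - ε) = l / N + ε := by field_simp; ring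
  have hlen0 : 0 ≤ l / N + ε := by positivity
  have hε' : (0:ℝ) ≤ 1 - ε - 0 := by linarith
  have hfin2 : volume S + ENNReal.ofReal ((c + l) / N - (c / N - ε)) ≠ ⊤ :=
    ENNReal.add_ne_top.mpr ⟨hfin, ENNReal.ofReal_ne_top⟩
  have := ENNReal.toReal_mono hfin2 hle
  rw [ENNReal.toReal_add hfin ENNReal.ofReal_ne_top, ENNReal.toReal_ofReal hε',
    ENNReal.toReal_ofReal (by rw [hlen]; exact hlen0)] at this
  rw [hlen] at this
  linarith

/-- A skewed item (width at most `(1/2 + 2ε)N`, height at most `εN`) inside `[0,N]²`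
survives a uniformly random strip of thickness `εN` (horizontal or vertical, each with
probability `1/2`, with uniform offset `a ∈ [0, 1−ε]`) with probability at least
`3/4 − 5ε/(1−ε)`. A horizontal strip `[0,N]×[aN,(a+ε)N]` misses the item iff
`(a+ε)N ≤ y` or `y + h ≤ aN`, and similarly for vertical strips. -/
theorem skewed_item_survives (ε : ℝ) (hε0 : 0 < ε) (hε1 : ε < 1)
    (N : ℝ) (hN : 0 < N) (x y w h : ℝ) (hw : 0 < w) (hh : 0 < h)
    (hx0 : 0 ≤ x) (hy0 : 0 ≤ y) (hxw : x + w ≤ N) (hyh : y + h ≤ N)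
    (hwid : w ≤ (1 / 2 + 2 * ε) * N) (hhei : h ≤ ε * N) :
    (1 / 2) * (volume {a : ℝ | a ∈ Set.Icc 0 (1 - ε) ∧
          ((a + ε) * N ≤ y ∨ y + h ≤ a * N)}).toReal / (1 - ε) +
      (1 / 2) * (volume {a : ℝ | a ∈ Set.Icc 0 (1 - ε) ∧
          ((a + ε) * N ≤ x ∨ x + w ≤ a * N)}).toReal / (1 - ε) ≥
      3 / 4 - 5 * ε / (1 - ε) := by
  have hd : (0:ℝ) < 1 - ε := by linarith
  set v1 := (volume {a : ℝ | a ∈ Set.Icc 0 (1 - ε) ∧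
          ((a + ε) * N ≤ y ∨ y + h ≤ a * N)}).toReal with hv1
  set v2 := (volume {a : ℝ | a ∈ Set.Icc 0 (1 - ε) ∧
          ((a + ε) * N ≤ x ∨ x + w ≤ a * N)}).toReal with hv2
  have hv10 : 0 ≤ v1 := ENNReal.toReal_nonneg
  have hv20 : 0 ≤ v2 := ENNReal.toReal_nonneg
  have hb1 : (1 - ε) - (h / N + ε) ≤ v1 := strip_vol_aux ε N y h hε0 hε1 hN hh
  have hb2 : (1 - ε) - (w / N + ε) ≤ v2 := strip_vol_aux ε N x w hε0 hε1 hN hw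
  have hhN : h / N ≤ ε := (div_le_iff₀ hN).mpr (by linarith)
  have hwN : w / N ≤ 1 / 2 + 2 * ε := (div_le_iff₀ hN).mpr (by linarith)
  have hb1' : 1 - 3 * ε ≤ v1 := by linarith
  have hb2' : 1 / 2 - 4 * ε ≤ v2 := by linarith
  have key : 3 / 4 * (1 - ε) - 5 * ε ≤ v1 / 2 + v2 / 2 := by
    rcases le_or_gt ε (1 / 8) with hc | hc
    · linarith
    · rcases le_or_gt ε (1 / 3) with hc2 | hc2
      · linarith
      · linarith
  rw [ge_iff_le, ← sub_nonneg]
  have heq : (1 / 2) * v1 / (1 - ε) + (1 / 2) * v2 / (1 - ε) - (3 / 4 - 5 * ε / (1 - ε)) =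
      (v1 / 2 + v2 / 2 - (3 / 4 * (1 - ε) - 5 * ε)) / (1 - ε) := by
    field_simp
  rw [heq]
  exact div_nonneg (by linarith) hd.le
end
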